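/- arXiv:1806.03752 — 3 statements merged into one kernel-verified Lean document; each statement's English description precedes it below -/
import Mathlib

section
/- A Polish group G is locally Roelcke precompact if and only if G is locally bounded and every coarsely bounded subset of G is Roelcke precompact. -/
open scoped Pointwise

/-- A subset `A` of a topological group `G` is *Roelcke precompact* if for every
neighborhood `V` of the identity there is a finite set `F ⊆ G` with `A ⊆ V * F * V`,
where `V * F * V = {v * f * w : v, w ∈ V, f ∈ F}`. -/
def RoelckePrecompact {G : Type*} [Group G] [TopologicalSpace G] (A : Set G) : Prop :=
  ∀ V ∈ nhds (1 : G), ∃ F : Finset G, A ⊆ V * (F : Set G) * V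

/-- A topological group is *locally Roelcke precompact* if some open neighborhood
of the identity is Roelcke precompact. -/
def LocallyRoelckePrecompact (G : Type*) [Group G] [TopologicalSpace G] : Prop :=
  ∃ U : Set G, IsOpen U ∧ (1 : G) ∈ U ∧ RoelckePrecompact U

/-- A subset `A` of a topological group is *coarsely bounded* if every continuous
left-invariant pseudometric on `G` assigns finite diameter to `A`. -/
def IsCoarselyBounded {G : Type*} [Group G] [TopologicalSpace G] (A : Set G) : Prop :=
  ∀ d : G → G → ℝ,
    Continuous (fun p : G × G => d p.1 p.2) →
    (∀ x, d x x = 0) → (∀ x y, d x y = d y x) → (∀ x y z, d x z ≤ d x y + d y z) →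
    (∀ g x y, d (g * x) (g * y) = d x y) →
    ∃ C : ℝ, ∀ x ∈ A, ∀ y ∈ A, d x y ≤ C

/-!
Roelcke precompact sets are coarsely bounded: a continuous left-invariant pseudometric `d` has
a ball `V` around `1`, and `V * F * V` is `d`-bounded for finite `F`. If `U` is a Roelcke
precompact identity neighbourhood, so is every `{f} * U * {e}`, and splitting
`A * B ⊆ V₁ * F * (V₁ * V₁) * E * V₁` in the middle shows that products of Roelcke precompact
sets, hence all sets `(F * U) ^ m` with `F` finite, are Roelcke precompact.

Conversely, in a separable group every coarsely bounded set `A` lies in some `(F * U) ^ m`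
(Rosendal). Take symmetric identity neighbourhoods `V n`, `n ∈ ℤ`, with `V n ^ 3 ⊆ V (n + 1)`,
shrinking as `n → -∞` and, for `n ≥ 0`, of the form `(U' * F_n * U') ^ (3 ^ n)` with `F_n`
exhausting a dense sequence, so that `⋃ n, V n = G`. As in the Birkhoff–Kakutani theorem, the
largest pseudometric below `(x, y) ↦ inf {2 ^ n | x⁻¹ * y ∈ V n}` is continuous, left-invariant,
and its ball of radius `2 ^ n` about `1` lies in `V n`. Being bounded for it, `A` lies in some
`V n` with `n ≥ 0`.
-/

open Set Filter Topology
open scoped NNReal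

section RoelckePrecompact
variable {G : Type*} [Group G] [TopologicalSpace G] {A B : Set G}

lemma RoelckePrecompact.mono (hB : RoelckePrecompact B) (h : A ⊆ B) : RoelckePrecompact A :=
  fun V hV => let ⟨F, hF⟩ := hB V hV; ⟨F, h.trans hF⟩

lemma roelckePrecompact_finset (F : Finset G) : RoelckePrecompact (F : Set G) := fun V hV =>
  ⟨F, fun x hx =>
    ⟨1 * x, Set.mul_mem_mul (mem_of_mem_nhds hV) hx, 1, mem_of_mem_nhds hV, by simp⟩⟩

lemma RoelckePrecompact.isCoarselyBounded (hA : RoelckePrecompact A) : IsCoarselyBounded A := by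
  intro d hd hself hcomm htri hinv
  have hball : {x | d 1 x < 1} ∈ 𝓝 (1 : G) :=
    (isOpen_lt (hd.comp (continuous_const.prodMk continuous_id)) continuous_const).mem_nhds
      (by simp [hself])
  obtain ⟨F, hF⟩ := hA _ hball
  obtain ⟨C, hC⟩ := (F.image (d 1)).exists_le
  have hbound : ∀ x ∈ A, d 1 x ≤ C + 2 := by
    intro x hx
    obtain ⟨_, ⟨v, hv, f, hf, rfl⟩, w, hw, rfl⟩ := hF hx
    have hvf : d v (v * f) = d 1 f := by simpa using hinv v 1 f
    have hfw : d (v * f) (v * f * w) = d 1 w := by simpa using hinv (v * f) 1 w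
    have := hC _ (Finset.mem_image_of_mem _ hf)
    linarith [htri 1 v (v * f), htri 1 (v * f) (v * f * w), hv.out, hw.out]
  exact ⟨2 * (C + 2), fun x hx y hy => by
    linarith [htri x 1 y, hcomm x 1, hbound x hx, hbound y hy]⟩

lemma IsCoarselyBounded.mono (hB : IsCoarselyBounded B) (h : A ⊆ B) : IsCoarselyBounded A :=
  fun d hc h0 hs ht hi =>
    let ⟨C, hC⟩ := hB d hc h0 hs ht hi
    ⟨C, fun x hx y hy => hC x (h hx) y (h hy)⟩

variable [ContinuousMul G]

lemma RoelckePrecompact.singleton_mul_mul_singleton (hA : RoelckePrecompact A) (g h : G) :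
    RoelckePrecompact ({g} * A * {h}) := by
  classical
  intro V hV
  have hconj : ∀ a : G, {x | a * x * a⁻¹ ∈ V} ∈ 𝓝 (1 : G) := fun a =>
    (continuous_const.mul continuous_id |>.mul continuous_const).continuousAt.preimage_mem_nhds
      (by simpa using hV)
  obtain ⟨F, hF⟩ := hA _ (inter_mem (hconj g) (hconj h⁻¹))
  refine ⟨F.image (g * · * h), ?_⟩
  rintro _ ⟨_, ⟨g', hg', a, ha, rfl⟩, h', hh', rfl⟩
  rw [mem_singleton_iff] at hg' hh'
  rw [hg', hh']
  obtain ⟨_, ⟨v, hv, f, hf, rfl⟩, w, hw, rfl⟩ := hF ha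
  refine ⟨g * v * g⁻¹ * (g * f * h), Set.mul_mem_mul hv.1 ?_, h⁻¹ * w * h⁻¹⁻¹, hw.2, by group⟩
  simpa using Finset.mem_image_of_mem (g * · * h) hf

lemma RoelckePrecompact.mul (hA : RoelckePrecompact A) (hB : RoelckePrecompact B) {U : Set G}
    (hU : U ∈ 𝓝 1) (hUr : RoelckePrecompact U) :
    RoelckePrecompact (A * B) := by
  classical
  intro V hV
  obtain ⟨V₁, hV₁, hV₁V⟩ := exists_nhds_one_split (inter_mem hV hU)
  obtain ⟨F, hF⟩ := hA V₁ hV₁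
  obtain ⟨E, hE⟩ := hB V₁ hV₁
  choose K hK using fun f e =>
    (hUr.mono inter_subset_right).singleton_mul_mul_singleton f e V₁ hV₁
  refine ⟨F.biUnion fun f => E.biUnion (K f), ?_⟩
  rintro _ ⟨_, ha, _, hb, rfl⟩
  obtain ⟨_, ⟨v₁, hv₁, f, hf, rfl⟩, v₂, hv₂, rfl⟩ := hF ha
  obtain ⟨_, ⟨w₁, hw₁, e, he, rfl⟩, w₂, hw₂, rfl⟩ := hE hb
  obtain ⟨_, ⟨u₁, hu₁, c, hc, rfl⟩, u₂, hu₂, hmid⟩ := hK f e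
    (Set.mul_mem_mul (Set.mul_mem_mul rfl (hV₁V _ hv₂ _ hw₁)) rfl)
  refine ⟨v₁ * u₁ * c, Set.mul_mem_mul (hV₁V _ hv₁ _ hu₁).1 ?_, u₂ * w₂,
    (hV₁V _ hu₂ _ hw₂).1, ?_⟩
  · simp only [Finset.coe_biUnion, mem_iUnion]
    exact ⟨f, hf, e, he, hc⟩
  · calc v₁ * u₁ * c * (u₂ * w₂) = v₁ * (u₁ * c * u₂) * w₂ := by group
      _ = v₁ * f * v₂ * (w₁ * e * w₂) := by rw [show u₁ * c * u₂ = _ from hmid]; group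

lemma RoelckePrecompact.pow (hA : RoelckePrecompact A) {U : Set G} (hU : U ∈ 𝓝 1)
    (hUr : RoelckePrecompact U) : ∀ n : ℕ, RoelckePrecompact (A ^ n)
  | 0 => by simpa using roelckePrecompact_finset (1 : Finset G)
  | n + 1 => by rw [pow_succ]; exact (hA.pow hU hUr n).mul hA hU hUr

end RoelckePrecompact

lemma PseudoMetricSpace.dist_ofPreNNDist_apply_apply {X : Type*} (d : X → X → ℝ≥0)
    (dist_self : ∀ x, d x x = 0) (dist_comm : ∀ x y, d x y = d y x) {f : X → X}
    (hf : Function.Surjective f) (hd : ∀ a b, d (f a) (f b) = d a b) (x y : X) :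
    @dist X (ofPreNNDist d dist_self dist_comm).toDist (f x) (f y) =
      @dist X (ofPreNNDist d dist_self dist_comm).toDist x y := by
  rw [dist_ofPreNNDist, dist_ofPreNNDist, NNReal.coe_inj]
  refine ((List.map_surjective_iff.2 hf).iInf_congr _ fun l => ?_).symm
  rw [← List.map_cons, show [f y] = [y].map f from rfl, ← List.map_append, List.zipWith_map]
  simp only [hd]

lemma NNReal.eq_zero_of_forall_le_two_zpow {x : ℝ≥0} (h : ∀ n : ℤ, x ≤ 2 ^ n) : x = 0 := by
  by_contra hx
  obtain ⟨n, hn, -⟩ := NNReal.exists_mem_Ico_zpow hx one_lt_two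
  have := (h (n - 1)).trans_lt (zpow_lt_zpow_right₀ one_lt_two (sub_one_lt n))
  exact this.not_ge hn

noncomputable def chainGauge {α : Type*} (V : ℤ → Set α) (x : α) : ℝ≥0 :=
  sInf ((fun n : ℤ => (2 : ℝ≥0) ^ n) '' {n | x ∈ V n})

lemma chainGauge_le {α : Type*} {V : ℤ → Set α} {x : α} {n : ℤ} (h : x ∈ V n) :
    chainGauge V x ≤ 2 ^ n :=
  csInf_le (OrderBot.bddBelow _) (mem_image_of_mem _ h)

def glueChains {α : Type*} (U N : ℕ → Set α) : ℤ → Set α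
  | .ofNat n => N n
  | .negSucc k => U (k + 1)

lemma Set.mul_mul_subset_mul_sq {G : Type*} [Group G] {S W : Set G} (hS : (1 : G) ∈ S) :
    W * S * W ⊆ (S * W) ^ 2 := by
  rw [sq]
  rintro _ ⟨_, ⟨a, ha, f, hf, rfl⟩, b, hb, rfl⟩
  exact ⟨1 * a, Set.mul_mem_mul hS ha, f * b, Set.mul_mem_mul hf hb, by group⟩

section Chains
variable {G : Type*} [Group G] [TopologicalSpace G]

structure IsNhdsOneChain (V : ℤ → Set G) : Prop where
  mem_nhds : ∀ n, V n ∈ 𝓝 (1 : G)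
  inv_eq : ∀ n, (V n)⁻¹ = V n
  mul_mul_subset : ∀ n, V n * V n * V n ⊆ V (n + 1)
  exists_mem : ∀ g, ∃ n, g ∈ V n

namespace IsNhdsOneChain

variable {V : ℤ → Set G} (hV : IsNhdsOneChain V)
include hV

lemma one_mem (n : ℤ) : (1 : G) ∈ V n := mem_of_mem_nhds (hV.mem_nhds n)

lemma monotone : Monotone V := by
  refine monotone_int_of_le_succ fun n g hg => hV.mul_mul_subset n ?_
  simpa using mul_mem_mul (mul_mem_mul hg (hV.one_mem n)) (hV.one_mem n)

lemma mem_of_chainGauge_lt {g : G} {n : ℤ} (h : chainGauge V g < 2 ^ (n + 1)) : g ∈ V n := by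
  obtain ⟨_, ⟨m, hm, rfl⟩, hlt⟩ :=
    exists_lt_of_csInf_lt (Set.Nonempty.image _ (hV.exists_mem g)) h
  have : m < n + 1 := (zpow_lt_zpow_iff_right₀ one_lt_two).1 hlt
  exact hV.monotone (by omega) hm

lemma chainGauge_inv (g : G) : chainGauge V g⁻¹ = chainGauge V g := by
  have : {n | g⁻¹ ∈ V n} = {n | g ∈ V n} := by
    ext n; rw [mem_ofPred_eq, ← Set.mem_inv, hV.inv_eq]; rfl
  rw [chainGauge, chainGauge, this]

lemma chainGauge_one : chainGauge V 1 = 0 :=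
  NNReal.eq_zero_of_forall_le_two_zpow fun n => chainGauge_le (hV.one_mem n)

-- The hypothesis of `PseudoMetricSpace.le_two_mul_dist_ofPreNNDist`.
lemma chainGauge_mul_mul_le (a b c : G) :
    chainGauge V (a * b * c) ≤
      2 * max (chainGauge V a) (max (chainGauge V b) (chainGauge V c)) := by
  set M := max (chainGauge V a) (max (chainGauge V b) (chainGauge V c))
  have key : ∀ n : ℤ, M < 2 ^ (n + 1) → chainGauge V (a * b * c) ≤ 2 ^ (n + 1) := by
    intro n hn
    simp only [M, max_lt_iff] at hn
    exact chainGauge_le <| hV.mul_mul_subset n <| mul_mem_mul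
      (mul_mem_mul (hV.mem_of_chainGauge_lt hn.1) (hV.mem_of_chainGauge_lt hn.2.1))
      (hV.mem_of_chainGauge_lt hn.2.2)
  rcases eq_or_ne M 0 with hM | hM
  · refine (NNReal.eq_zero_of_forall_le_two_zpow fun n => ?_).trans_le zero_le
    simpa using key (n - 1) (by rw [hM]; positivity)
  · obtain ⟨n, hn, hn'⟩ := NNReal.exists_mem_Ico_zpow hM one_lt_two
    calc chainGauge V (a * b * c) ≤ 2 ^ (n + 1) := key n hn'
      _ = 2 * 2 ^ n := by rw [zpow_add_one₀ two_ne_zero, mul_comm]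
      _ ≤ 2 * M := by gcongr

end IsNhdsOneChain

structure IsContinuousLeftInvariantPseudometric (d : G → G → ℝ) : Prop where
  continuous : Continuous fun p : G × G => d p.1 p.2
  dist_self : ∀ x, d x x = 0
  comm : ∀ x y, d x y = d y x
  triangle : ∀ x y z, d x z ≤ d x y + d y z
  mul_left : ∀ g x y, d (g * x) (g * y) = d x y

lemma continuous_of_mul_left_invariant [ContinuousMul G] {d : G → G → ℝ}
    (hcomm : ∀ x y, d x y = d y x) (htri : ∀ x y z, d x z ≤ d x y + d y z)
    (hinv : ∀ g x y, d (g * x) (g * y) = d x y) (hd : ∀ ε > 0, ∀ᶠ g in 𝓝 1, d 1 g < ε) :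
    Continuous fun p : G × G => d p.1 p.2 := by
  have hnear : ∀ x : G, ∀ ε > 0, ∀ᶠ x' in 𝓝 x, d x x' < ε := fun x ε hε => by
    have : Tendsto (x⁻¹ * ·) (𝓝 x) (𝓝 1) :=
      (continuous_const_mul x⁻¹).tendsto' x 1 (inv_mul_cancel x)
    filter_upwards [this.eventually (hd ε hε)] with x' hx'
    rwa [← hinv x⁻¹, inv_mul_cancel]
  refine continuous_iff_continuousAt.2 fun ⟨x, y⟩ => Metric.tendsto_nhds.2 fun ε hε => ?_
  filter_upwards [continuousAt_fst.eventually (hnear x (ε / 2) (half_pos hε)),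
    continuousAt_snd.eventually (hnear y (ε / 2) (half_pos hε))] with p hx hy
  rw [Real.dist_eq, abs_sub_lt_iff]
  have := htri x p.1 y; have := htri p.1 p.2 y; have := htri p.1 x p.2; have := htri x y p.2
  constructor <;> linarith [hcomm x p.1, hcomm y p.2]

theorem IsNhdsOneChain.exists_pseudometric [ContinuousMul G] {V : ℤ → Set G}
    (hV : IsNhdsOneChain V) :
    ∃ d : G → G → ℝ, IsContinuousLeftInvariantPseudometric d ∧
      ∀ g n, d 1 g < 2 ^ n → g ∈ V n := by
  let D : G → G → ℝ≥0 := fun x y => chainGauge V (x⁻¹ * y)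
  have hD_self : ∀ x, D x x = 0 := fun x => by simp [D, hV.chainGauge_one]
  have hD_comm : ∀ x y, D x y = D y x := fun x y => by
    show chainGauge V _ = chainGauge V _
    rw [← hV.chainGauge_inv, mul_inv_rev, inv_inv]
  let M := PseudoMetricSpace.ofPreNNDist D hD_self hD_comm
  let d : G → G → ℝ := @dist G M.toDist
  have hinv : ∀ g x y, d (g * x) (g * y) = d x y := fun g =>
    PseudoMetricSpace.dist_ofPreNNDist_apply_apply D hD_self hD_comm
      (mul_left_surjective g) fun a b => by simp [D, mul_assoc]
  refine ⟨d, ⟨continuous_of_mul_left_invariant (@dist_comm G M) (@dist_triangle G M) hinv ?_,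
    @dist_self G M, @dist_comm G M, @dist_triangle G M, hinv⟩, fun g n hg => ?_⟩
  · intro ε hε
    obtain ⟨n, hn⟩ : ∃ n : ℕ, (2⁻¹ : ℝ) ^ n < ε := exists_pow_lt_of_lt_one hε (by norm_num)
    filter_upwards [hV.mem_nhds (-n)] with g hg
    calc d 1 g ≤ D 1 g := PseudoMetricSpace.dist_ofPreNNDist_le D hD_self hD_comm 1 g
      _ ≤ (2⁻¹ : ℝ) ^ n := by
        have : chainGauge V g ≤ 2⁻¹ ^ n :=
          (chainGauge_le hg).trans_eq (by rw [zpow_neg, zpow_natCast, inv_pow])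
        simp only [D, inv_one, one_mul]
        exact_mod_cast this
      _ < ε := hn
  · refine hV.mem_of_chainGauge_lt ?_
    have := PseudoMetricSpace.le_two_mul_dist_ofPreNNDist D hD_self hD_comm
      (fun x₁ x₂ x₃ x₄ => by
        simpa only [D, mul_assoc, mul_inv_cancel_left] using
          hV.chainGauge_mul_mul_le (x₁⁻¹ * x₂) (x₂⁻¹ * x₃) (x₃⁻¹ * x₄)) 1 g
    rw [← NNReal.coe_lt_coe, zpow_add_one₀ two_ne_zero]
    simp only [D, inv_one, one_mul] at this
    push_cast
    change _ ≤ 2 * d 1 g at this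
    linarith

lemma isNhdsOneChain_glueChains {U N : ℕ → Set G} (hU : ∀ k, U k ∈ 𝓝 1)
    (hUinv : ∀ k, (U k)⁻¹ = U k) (hUmul : ∀ k, U (k + 1) * U (k + 1) * U (k + 1) ⊆ U k)
    (hUN : ∀ k, U 0 ⊆ N k) (hNinv : ∀ k, (N k)⁻¹ = N k)
    (hNmul : ∀ k, N k * N k * N k ⊆ N (k + 1))
    (hcover : ∀ g, ∃ k, g ∈ N k) : IsNhdsOneChain (glueChains U N) where
  mem_nhds
    | .ofNat n => mem_of_superset (hU 0) (hUN n)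
    | .negSucc k => hU (k + 1)
  inv_eq := by rintro (n | k) <;> simp only [glueChains, hUinv, hNinv]
  mul_mul_subset := by
    rintro (n | _ | k)
    · exact hNmul n
    · exact (hUmul 0).trans (hUN 0)
    · exact hUmul (k + 1)
  exists_mem g := let ⟨k, hk⟩ := hcover g; ⟨k, hk⟩

variable [IsTopologicalGroup G]

lemma exists_symmetric_nhds_one_mul_mul_subset {S : Set G} (hS : S ∈ 𝓝 1) :
    ∃ T ∈ 𝓝 (1 : G), T⁻¹ = T ∧ T * T * T ⊆ S := by
  obtain ⟨T, hT, hTS⟩ := exists_nhds_one_split4 hS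
  refine ⟨T ∩ T⁻¹, inter_mem hT (inv_mem_nhds_one G hT), by simp [inter_comm], ?_⟩
  rintro _ ⟨_, ⟨a, ha, b, hb, rfl⟩, c, hc, rfl⟩
  simpa using hTS ha.1 hb.1 hc.1 (mem_of_mem_nhds hT)

lemma exists_symmetric_nhds_one_seq {W : Set G} (hW : W ∈ 𝓝 1) :
    ∃ U : ℕ → Set G, (∀ k, U k ∈ 𝓝 1) ∧ (∀ k, (U k)⁻¹ = U k) ∧
      (∀ k, U (k + 1) * U (k + 1) * U (k + 1) ⊆ U k) ∧ U 0 ⊆ W := by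
  choose T hT using fun S : {S : Set G // S ∈ 𝓝 1} =>
    exists_symmetric_nhds_one_mul_mul_subset S.2
  let half : {S : Set G // S ∈ 𝓝 1} → {S : Set G // S ∈ 𝓝 1} := fun S => ⟨T S, (hT S).1⟩
  have hsub : ∀ S, (half S : Set G) ⊆ S := fun S x hx => (hT S).2.2 <| by
    have h1 := mem_of_mem_nhds (hT S).1
    simpa using Set.mul_mem_mul (Set.mul_mem_mul hx h1) h1
  refine ⟨fun k => half^[k + 1] ⟨W, hW⟩, fun k => Subtype.prop _, fun k => ?_, fun k => ?_,
    hsub _⟩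
  · dsimp only; rw [Function.iterate_succ_apply']; exact (hT _).2.1
  · dsimp only; rw [Function.iterate_succ_apply' _ (k + 1)]; exact (hT _).2.2

lemma exists_nat_chain_of_denseRange {W : Set G} (hW : W ∈ 𝓝 1) (hWinv : W⁻¹ = W) {gs : ℕ → G}
    (hgs : DenseRange gs) :
    ∃ N : ℕ → Set G, (∀ k, W ⊆ N k) ∧ (∀ k, (N k)⁻¹ = N k) ∧
      (∀ k, N k * N k * N k ⊆ N (k + 1)) ∧ (∀ g, ∃ k, g ∈ N k) ∧
      ∀ k, ∃ (F : Finset G) (m : ℕ), N k ⊆ ((F : Set G) * W) ^ m := by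
  classical
  let F : ℕ → Finset G := fun k => insert 1 ((Finset.range k).image gs)
  let E : ℕ → Set G := fun k => W * ((F k : Set G) ∪ (F k : Set G)⁻¹) * W
  have hE_mono : Monotone E := fun k l hkl => by
    have : (F k : Set G) ⊆ F l := Finset.coe_subset.2 <|
      Finset.insert_subset_insert _ (Finset.image_subset_image (Finset.range_mono hkl))
    exact mul_subset_mul_right <|
      mul_subset_mul_left (union_subset_union this (inv_subset_inv.2 this))
  have hF_one : ∀ k, (1 : G) ∈ (F k : Set G) ∪ (F k : Set G)⁻¹ :=
    fun k => Or.inl (Finset.mem_insert_self 1 _)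
  have hWE : ∀ k, W ⊆ E k := fun k w hw => by
    simpa using Set.mul_mem_mul (Set.mul_mem_mul hw (hF_one k)) (mem_of_mem_nhds hW)
  have hE_one : ∀ k, (1 : G) ∈ E k := fun k => hWE k (mem_of_mem_nhds hW)
  refine ⟨fun k => E k ^ 3 ^ k, fun k => ?_, fun k => ?_, fun k => ?_, fun g => ?_, fun k => ?_⟩
  · exact (hWE k).trans (subset_pow (hE_one k) (pow_ne_zero _ three_ne_zero))
  · have hEinv : (E k)⁻¹ = E k := by
      simp only [E, mul_inv_rev, union_inv, inv_inv, hWinv, union_comm, mul_assoc]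
    rw [← inv_pow, hEinv]
  · rw [← pow_three', ← pow_mul, ← pow_succ]
    exact pow_subset_pow_left (hE_mono k.le_succ)
  · obtain ⟨i, w, hw, hwi⟩ := hgs.mem_nhds (smul_mem_nhds_self.2 hW : g • W ∈ 𝓝 g)
    have hgi : gs i ∈ F (i + 1) :=
      Finset.mem_insert_of_mem (Finset.mem_image_of_mem gs (Finset.mem_range.2 i.lt_succ_self))
    refine ⟨i + 1, subset_pow (hE_one _) (pow_ne_zero _ three_ne_zero) ?_⟩
    refine ⟨1 * gs i, Set.mul_mem_mul (mem_of_mem_nhds hW) (Or.inl hgi), w⁻¹, ?_, ?_⟩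
    · rw [← hWinv]; exact inv_mem_inv.2 hw
    · show 1 * gs i * w⁻¹ = g
      rw [← hwi]; simp
  · refine ⟨F k ∪ (F k)⁻¹, 2 * 3 ^ k, ?_⟩
    rw [Finset.coe_union, Finset.coe_inv, pow_mul]
    exact pow_subset_pow_left (Set.mul_mul_subset_mul_sq (hF_one k))

theorem IsCoarselyBounded.exists_subset_pow [TopologicalSpace.SeparableSpace G] {A W : Set G}
    (hA : IsCoarselyBounded A) (hW : W ∈ 𝓝 1) :
    ∃ (F : Finset G) (m : ℕ), A ⊆ ((F : Set G) * W) ^ m := by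
  obtain ⟨U, hU, hUinv, hUmul, hUW⟩ := exists_symmetric_nhds_one_seq hW
  obtain ⟨N, hUN, hNinv, hNmul, hcover, hNpow⟩ :=
    exists_nat_chain_of_denseRange (hU 0) (hUinv 0) (TopologicalSpace.denseRange_denseSeq G)
  obtain ⟨d, hd, hdN⟩ :=
    (isNhdsOneChain_glueChains hU hUinv hUmul hUN hNinv hNmul hcover).exists_pseudometric
  obtain ⟨C, hC⟩ := hA d hd.continuous hd.dist_self hd.comm hd.triangle hd.mul_left
  rcases A.eq_empty_or_nonempty with rfl | ⟨a, ha⟩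
  · exact ⟨∅, 0, empty_subset _⟩
  obtain ⟨n, hn⟩ := pow_unbounded_of_one_lt (d 1 a + C) one_lt_two
  obtain ⟨F, m, hF⟩ := hNpow n
  refine ⟨F, m, fun x hx => pow_subset_pow_left (mul_subset_mul_left hUW) (hF ?_)⟩
  refine hdN x n ?_
  calc d 1 x ≤ d 1 a + d a x := hd.triangle 1 a x
    _ < 2 ^ (n : ℤ) := by rw [zpow_natCast]; linarith [hC a ha x hx]

end Chains

/-- A Polish group is locally Roelcke precompact if and only if it is locally bounded
(some identity neighborhood is coarsely bounded) and every coarsely bounded subset is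
Roelcke precompact. -/
theorem locallyRoelckePrecompact_iff_locallyBounded_and_cb_eq_rpc
    (G : Type*) [Group G] [TopologicalSpace G] [IsTopologicalGroup G] [PolishSpace G] :
    LocallyRoelckePrecompact G ↔
      ((∃ V ∈ nhds (1 : G), IsCoarselyBounded V) ∧
        ∀ A : Set G, IsCoarselyBounded A → RoelckePrecompact A) := by
  constructor
  · rintro ⟨U, hUo, hU1, hU⟩
    have hUn : U ∈ 𝓝 1 := hUo.mem_nhds hU1
    refine ⟨⟨U, hUn, hU.isCoarselyBounded⟩, fun A hA => ?_⟩
    obtain ⟨F, m, hAF⟩ := hA.exists_subset_pow hUn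
    exact (((roelckePrecompact_finset F).mul hU hUn hU).pow hUn hU m).mono hAF
  · rintro ⟨⟨V, hV, hVcb⟩, hcb⟩
    obtain ⟨U, hUV, hUo, hU1⟩ := mem_nhds_iff.1 hV
    exact ⟨U, hUo, hU1, hcb U (hVcb.mono hUV)⟩
end

section
/- A Polish group is locally compact if and only if it is Weil complete (complete in its left uniformity) and locally Roelcke precompact. -/
open scoped Pointwise

/-- The left uniformity of a topological group: the pullback under inversion of the
right uniformity `TopologicalGroup.toUniformSpace G`; its basic entourages are the sets
`{(f,g) | f⁻¹ * g ∈ V}` for `V` a neighborhood of the identity. -/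
noncomputable def leftUniformity (G : Type*) [Group G] [TopologicalSpace G]
    [IsTopologicalGroup G] : UniformSpace G :=
  UniformSpace.comap (fun g : G => g⁻¹) (IsTopologicalGroup.rightUniformSpace G)

/-!
A compact identity neighbourhood is Roelcke precompact, being covered by finitely many translates
`x • V`. Conversely, let `U` be a Roelcke precompact identity neighbourhood and, using first
countability, `W₀ ⊇ W₁ ⊇ ⋯` a basis of symmetric identity neighbourhoods with
`Wₖ₊₁ * Wₖ₊₁ ⊆ Wₖ`. An ultrafilter on `closure U` contains sets `Wₖ₊₂ * {gₖ} * Wₖ₊₂`, and any two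
consecutive ones meet, so that `gₖ₊₁ = pₖ * gₖ * qₖ` with `pₖ, qₖ ∈ Wₖ₊₁`. Hence
`gₙ = (p₀⁻¹ ⋯ pₙ₋₁⁻¹)⁻¹ * g₀ * (q₀ ⋯ qₙ₋₁)`, and both products are Cauchy for the left uniformity,
so they converge by Weil completeness. The ultrafilter then converges to `lim gₙ`, and `closure U`
is a compact neighbourhood of `1`.
-/

open Filter Set Topology

section

variable {G : Type*} [Group G] [TopologicalSpace G] [IsTopologicalGroup G]

theorem leftUniformity_eq : leftUniformity G = IsTopologicalGroup.leftUniformSpace G := by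
  have : (Equiv.inv G ∘ fun g : G => g⁻¹) = id := funext inv_inv
  rw [leftUniformity, ← comap_inv_leftUniformSpace, ← UniformSpace.comap_comap, this,
    uniformSpace_comap_id, id]

theorem completeSpace_leftUniformity_of_locallyCompactSpace [LocallyCompactSpace G] :
    @CompleteSpace G (leftUniformity G) := by
  let := IsTopologicalGroup.rightUniformSpace G
  have : IsRightUniformGroup G := ⟨rfl⟩
  rw [leftUniformity_eq, ← IsTopologicalGroup.completeSpace_rightUniformSpace_iff_leftUniformSpace]
  exact IsRightUniformGroup.completeSpace_of_weaklyLocallyCompactSpace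

theorem IsCompact.roelckePrecompact {K : Set G} (hK : IsCompact K) : RoelckePrecompact K := by
  intro V hV
  obtain ⟨t, -, hKt⟩ := hK.elim_nhds_subcover (fun x => x • V) fun x _ => smul_mem_nhds_self.2 hV
  refine ⟨t, hKt.trans ?_⟩
  rw [← Finset.set_biUnion_coe, iUnion_smul_set, smul_eq_mul]
  exact mul_subset_mul_right (subset_mul_right _ (mem_of_mem_nhds hV))

theorem locallyRoelckePrecompact_of_locallyCompactSpace [LocallyCompactSpace G] :
    LocallyRoelckePrecompact G := by
  obtain ⟨K, hK, hK1⟩ := exists_compact_mem_nhds (1 : G)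
  exact ⟨interior K, isOpen_interior, mem_interior_iff_mem_nhds.2 hK1,
    fun V hV => (hK.roelckePrecompact V hV).imp fun _ h => interior_subset.trans h⟩

theorem RoelckePrecompact.closure {A : Set G} (hA : RoelckePrecompact A) :
    RoelckePrecompact (closure A) := by
  intro V hV
  obtain ⟨W, hW, -, hWinv, hWV⟩ := exists_closed_nhds_one_inv_eq_mul_subset hV
  have hW1 : (1 : G) ∈ W := mem_of_mem_nhds hW
  obtain ⟨F, hF⟩ := hA W hW
  refine ⟨F, ?_⟩
  calc _root_.closure A ⊆ A * W :=
        closure_subset_mul_right_of_mem_nhds_one_of_inv A hW fun x hx => by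
          rwa [← Set.mem_inv, hWinv]
    _ ⊆ W * F * W * W := mul_subset_mul_right hF
    _ = W * F * (W * W) := mul_assoc _ _ _
    _ ⊆ V * F * V :=
        mul_subset_mul (mul_subset_mul_right ((subset_mul_left W hW1).trans hWV)) hWV

end

section

variable {G : Type*} [Group G]

theorem exists_eq_mul_mul_of_inter_nonempty {V : Set G} (hV : V⁻¹ = V) {a b : G}
    (h : (V * {a} * V ∩ (V * {b} * V)).Nonempty) : ∃ p ∈ V * V, ∃ q ∈ V * V, b = p * a * q := by
  obtain ⟨_, ⟨_, ⟨x, hx, _, ha, rfl⟩, w, hw, rfl⟩, _, ⟨y, hy, _, hb, rfl⟩, z, hz, hyz⟩ := h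
  rw [mem_singleton_iff] at ha hb
  beta_reduce at hyz
  rw [ha, hb] at hyz
  have hinv : ∀ {v}, v ∈ V → v⁻¹ ∈ V := fun hv => by rwa [← Set.mem_inv, hV]
  refine ⟨y⁻¹ * x, mul_mem_mul (hinv hy) hx, w * z⁻¹, mul_mem_mul hw (hinv hz), ?_⟩
  calc b = y⁻¹ * (y * b * z) * z⁻¹ := by group
    _ = y⁻¹ * x * a * (w * z⁻¹) := by rw [hyz]; group

theorem eq_prod_inv_mul_mul_prod_of_forall_succ_eq {g p q : ℕ → G}
    (h : ∀ k, g (k + 1) = p k * g k * q k) (n : ℕ) :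
    g n = ((List.range n).map fun k => (p k)⁻¹).prod⁻¹ * g 0 * ((List.range n).map q).prod := by
  induction n with
  | zero => simp
  | succ n ih =>
    rw [h, ih]
    simp only [List.range_succ, List.map_append, List.prod_append, List.map_cons, List.map_nil,
      List.prod_cons, List.prod_nil]
    group

end

section

variable {G : Type*} [Group G] [TopologicalSpace G]

/-- Up to replacing `V` by `V * V`, this says that `f` is Cauchy for the Roelcke uniformity,
whose entourages are `{(x, y) | y ∈ V * {x} * V}`. -/
def IsRoelckeCauchy (f : Filter G) : Prop :=
  ∀ V ∈ 𝓝 (1 : G), ∃ g : G, V * {g} * V ∈ f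

theorem RoelckePrecompact.isRoelckeCauchy {A : Set G} (hA : RoelckePrecompact A)
    {f : Ultrafilter G} (hAf : A ∈ f) : IsRoelckeCauchy (f : Filter G) := by
  intro V hV
  obtain ⟨F, hF⟩ := hA V hV
  have hcover : V * (F : Set G) * V ⊆ ⋃ g ∈ (F : Set G), V * {g} * V := by
    rintro _ ⟨_, ⟨v, hv, g, hg, rfl⟩, w, hw, rfl⟩
    exact mem_biUnion hg (mul_mem_mul (mul_mem_mul hv rfl) hw)
  obtain ⟨g, -, hg⟩ :=
    (Ultrafilter.finite_biUnion_mem_iff F.finite_toSet).1 (mem_of_superset hAf (hF.trans hcover))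
  exact ⟨g, hg⟩

structure IsSymmetricHalvingBasis (W : ℕ → Set G) : Prop where
  hasAntitoneBasis : (𝓝 (1 : G)).HasAntitoneBasis W
  inv_eq : ∀ n, (W n)⁻¹ = W n
  mul_subset : ∀ n, W (n + 1) * W (n + 1) ⊆ W n

namespace IsSymmetricHalvingBasis

variable {W : ℕ → Set G}

theorem one_mem (hW : IsSymmetricHalvingBasis W) (n : ℕ) : (1 : G) ∈ W n :=
  mem_of_mem_nhds (hW.hasAntitoneBasis.mem n)

theorem inv_mul_mem_of_le (hW : IsSymmetricHalvingBasis W) {B : ℕ → G}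
    (hB : ∀ k, (B k)⁻¹ * B (k + 1) ∈ W (k + 1)) {k m n : ℕ} (hm : k ≤ m) (hn : k ≤ n) :
    (B m)⁻¹ * B n ∈ W k := by
  have telescope : ∀ d k, (B k)⁻¹ * B (k + d) ∈ W k := by
    intro d
    induction d with
    | zero => simpa using hW.one_mem
    | succ d ih =>
      intro k
      have h : (B k)⁻¹ * B (k + (d + 1)) =
          ((B k)⁻¹ * B (k + 1)) * ((B (k + 1))⁻¹ * B (k + 1 + d)) := by
        rw [show k + (d + 1) = k + 1 + d by omega]
        group
      exact h ▸ hW.mul_subset k (mul_mem_mul (hB k) (ih (k + 1)))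
  wlog hmn : m ≤ n generalizing m n
  · rw [← hW.inv_eq, Set.mem_inv, mul_inv_rev, inv_inv]
    exact this hn hm (le_of_not_ge hmn)
  obtain ⟨d, rfl⟩ := Nat.exists_eq_add_of_le hmn
  exact hW.hasAntitoneBasis.antitone hm (telescope d m)

end IsSymmetricHalvingBasis

variable [IsTopologicalGroup G]

variable (G) in
theorem exists_isSymmetricHalvingBasis [FirstCountableTopology G] :
    ∃ W : ℕ → Set G, IsSymmetricHalvingBasis W := by
  obtain ⟨u, hu, hmul⟩ := IsTopologicalGroup.exists_antitone_basis_nhds_one G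
  have hinv : ∀ n, (u n ∩ (u n)⁻¹)⁻¹ = u n ∩ (u n)⁻¹ := fun n => by simp [inter_comm]
  have hmul' : ∀ n, (u (n + 1) ∩ (u (n + 1))⁻¹) * (u (n + 1) ∩ (u (n + 1))⁻¹) ⊆ u n :=
    fun n => (mul_subset_mul inter_subset_left inter_subset_left).trans (hmul n)
  refine ⟨fun n => u n ∩ (u n)⁻¹, ⟨?_, ?_⟩, hinv, fun n => subset_inter (hmul' n) ?_⟩
  · exact hu.1.to_hasBasis' (fun n _ => ⟨n, trivial, inter_subset_left⟩)
      fun n _ => inter_mem (hu.mem n) (inv_mem_nhds_one G (hu.mem n))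
  · exact fun m n h => inter_subset_inter (hu.antitone h) (inv_subset_inv.2 (hu.antitone h))
  · rw [← Set.inv_subset, mul_inv_rev, hinv]
    exact hmul' n

namespace IsSymmetricHalvingBasis

variable {W : ℕ → Set G}

theorem exists_tendsto (hG : @CompleteSpace G (leftUniformity G))
    (hW : IsSymmetricHalvingBasis W) {B : ℕ → G}
    (hB : ∀ k, (B k)⁻¹ * B (k + 1) ∈ W (k + 1)) : ∃ x, Tendsto B atTop (𝓝 x) := by
  let := IsTopologicalGroup.leftUniformSpace G
  rw [leftUniformity_eq] at hG
  refine cauchySeq_tendsto_of_complete <|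
    cauchySeq_of_controlled (fun k => {p : G × G | p.1⁻¹ * p.2 ∈ W k}) (fun s hs => ?_)
      fun _ _ _ hm hn => hW.inv_mul_mem_of_le hB hm hn
  obtain ⟨t, ht, hts⟩ := mem_comap.1 hs
  obtain ⟨k, hk⟩ := hW.hasAntitoneBasis.mem_iff.1 ht
  exact ⟨k, fun p hp => hts (hk hp)⟩

theorem exists_tendsto_prod (hG : @CompleteSpace G (leftUniformity G))
    (hW : IsSymmetricHalvingBasis W) {q : ℕ → G} (hq : ∀ k, q k ∈ W (k + 1)) :
    ∃ x, Tendsto (fun n => ((List.range n).map q).prod) atTop (𝓝 x) :=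
  hW.exists_tendsto hG fun k => by simpa [List.range_succ] using hq k

end IsSymmetricHalvingBasis

theorem eventually_mul_singleton_mul_subset {ι : Type*} {l : Filter ι} {V : ι → Set G}
    (hV : Tendsto V l (𝓝 1).smallSets) {g : ι → G} {x : G} (hg : Tendsto g l (𝓝 x))
    {O : Set G} (hO : O ∈ 𝓝 x) : ∀ᶠ i in l, V i * {g i} * V i ⊆ O := by
  have hcont : Tendsto (fun p : G × G × G => p.1 * p.2.1 * p.2.2)
      (𝓝 1 ×ˢ 𝓝 x ×ˢ 𝓝 1) (𝓝 x) := by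
    simpa [nhds_prod_eq] using (by fun_prop : Continuous fun p : G × G × G =>
      p.1 * p.2.1 * p.2.2).tendsto (1, x, 1)
  obtain ⟨P, hP, QR, hQR, hPQR⟩ := mem_prod_iff.1 (hcont hO)
  obtain ⟨Q, hQ, R, hR, hQRsub⟩ := mem_prod_iff.1 hQR
  filter_upwards [tendsto_smallSets_iff.1 hV _ (inter_mem hP hR), hg.eventually_mem hQ]
    with i hi hgi
  rintro _ ⟨_, ⟨a, ha, _, rfl, rfl⟩, b, hb, rfl⟩
  exact hPQR (mk_mem_prod (hi ha).1 (hQRsub (mk_mem_prod hgi (hi hb).2)))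

theorem IsRoelckeCauchy.exists_le_nhds [FirstCountableTopology G]
    (hG : @CompleteSpace G (leftUniformity G)) {f : Filter G} [f.NeBot]
    (hf : IsRoelckeCauchy f) : ∃ x, f ≤ 𝓝 x := by
  obtain ⟨W, hW⟩ := exists_isSymmetricHalvingBasis G
  choose g hg using fun k => hf (W (k + 2)) (hW.hasAntitoneBasis.mem _)
  have hstep : ∀ k, ∃ p ∈ W (k + 1), ∃ q ∈ W (k + 1), g (k + 1) = p * g k * q := by
    intro k
    have hWk := hW.hasAntitoneBasis.antitone (Nat.le_succ (k + 2))
    obtain ⟨p, hp, q, hq, hpq⟩ := exists_eq_mul_mul_of_inter_nonempty (hW.inv_eq (k + 2)) <|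
      f.nonempty_of_mem <| inter_mem (hg k) <|
        mem_of_superset (hg (k + 1)) (mul_subset_mul (mul_subset_mul_right hWk) hWk)
    exact ⟨p, hW.mul_subset _ hp, q, hW.mul_subset _ hq, hpq⟩
  choose p hp q hq hpq using hstep
  obtain ⟨β, hβ⟩ := hW.exists_tendsto_prod hG hq
  obtain ⟨γ, hγ⟩ := hW.exists_tendsto_prod hG (q := fun k => (p k)⁻¹) fun k => by
    rw [← hW.inv_eq]
    exact inv_mem_inv.2 (hp k)
  have hlim : Tendsto g atTop (𝓝 (γ⁻¹ * g 0 * β)) :=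
    ((hγ.inv.mul tendsto_const_nhds).mul hβ).congr fun n =>
      (eq_prod_inv_mul_mul_prod_of_forall_succ_eq hpq n).symm
  refine ⟨γ⁻¹ * g 0 * β, fun O hO => ?_⟩
  obtain ⟨k, hk⟩ := (eventually_mul_singleton_mul_subset
    (hW.hasAntitoneBasis.tendsto_smallSets.comp (tendsto_add_atTop_nat 2)) hlim hO).exists
  exact mem_of_superset (hg k) hk

theorem RoelckePrecompact.isCompact_of_isClosed [FirstCountableTopology G]
    (hG : @CompleteSpace G (leftUniformity G)) {A : Set G} (hA : RoelckePrecompact A)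
    (hAc : IsClosed A) : IsCompact A := by
  refine isCompact_iff_ultrafilter_le_nhds'.2 fun f hAf => ?_
  obtain ⟨x, hx⟩ := (hA.isRoelckeCauchy hAf).exists_le_nhds hG
  exact ⟨x, hAc.mem_of_tendsto (tendsto_id'.2 hx) (eventually_mem_set.2 hAf), hx⟩

theorem LocallyRoelckePrecompact.locallyCompactSpace [FirstCountableTopology G]
    (hG : @CompleteSpace G (leftUniformity G)) (hU : LocallyRoelckePrecompact G) :
    LocallyCompactSpace G := by
  obtain ⟨U, hUo, hU1, hU⟩ := hU
  exact (hU.closure.isCompact_of_isClosed hG isClosed_closure)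
    |>.locallyCompactSpace_of_mem_nhds_of_group (mem_of_superset (hUo.mem_nhds hU1) subset_closure)

end

/-- A Polish group is locally compact if and only if it is Weil complete (complete in its
left uniformity) and locally Roelcke precompact. -/
theorem locallyCompact_iff_weilComplete_and_locallyRoelckePrecompact
    (G : Type*) [Group G] [TopologicalSpace G] [IsTopologicalGroup G] [PolishSpace G] :
    LocallyCompactSpace G ↔
      (@CompleteSpace G (leftUniformity G) ∧ LocallyRoelckePrecompact G) :=
  ⟨fun _ => ⟨completeSpace_leftUniformity_of_locallyCompactSpace,
      locallyRoelckePrecompact_of_locallyCompactSpace⟩,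
    fun ⟨hG, hU⟩ => hU.locallyCompactSpace hG⟩
end

section
/- Let G be a Polish group and H an open subgroup of G. Then G is locally Roelcke precompact if and only if H (with the subspace topology, under which it is a Polish group) is locally Roelcke precompact. -/
/-! Identity neighbourhoods of the open subgroup `H` are exactly those of `G` contained in `H`,
and if `a = v * f * w` with `a, v, w ∈ H` then `f ∈ H`; so covers `V * F * V` transfer in both
directions between `H` and `G`. -/

open scoped Pointwise

theorem RoelckePrecompact.mono_s11 {G : Type*} [Group G] [TopologicalSpace G] {A B : Set G}
    (hB : RoelckePrecompact B) (hAB : A ⊆ B) : RoelckePrecompact A := fun V hV =>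
  (hB V hV).imp fun _ hF => hAB.trans hF

theorem RoelckePrecompact.image {G K : Type*} [Group G] [TopologicalSpace G] [Group K]
    [TopologicalSpace K] {A : Set G} (hA : RoelckePrecompact A) (f : G →* K)
    (hf : Continuous f) : RoelckePrecompact (f '' A) := by
  classical
  intro V hV
  obtain ⟨F, hF⟩ := hA (f ⁻¹' V) (hf.continuousAt.preimage_mem_nhds (by simpa using hV))
  refine ⟨F.image f, ?_⟩
  calc f '' A ⊆ f '' (f ⁻¹' V * F * f ⁻¹' V) := Set.image_mono hF
    _ = f '' (f ⁻¹' V) * f '' F * f '' (f ⁻¹' V) := by simp only [Set.image_mul]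
    _ ⊆ V * (F.image f : Set K) * V := by
      rw [Finset.coe_image]
      gcongr <;> exact Set.image_preimage_subset f V

theorem Subgroup.preimage_val_image_mul_mul_image {G : Type*} [Group G] (H : Subgroup G)
    (V W : Set H) (F : Set G) :
    ((↑) : H → G) ⁻¹' (((↑) '' V) * F * ((↑) '' W)) = V * ((↑) ⁻¹' F) * W := by
  ext a
  constructor
  · rintro ⟨_, ⟨_, ⟨v, hv, rfl⟩, f, hf, rfl⟩, _, ⟨w, hw, rfl⟩, hvfw⟩
    have hfH : f ∈ H := by
      rw [show f = (v : G)⁻¹ * a * (w : G)⁻¹ by rw [← hvfw]; group]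
      exact mul_mem (mul_mem (inv_mem v.2) a.2) (inv_mem w.2)
    exact ⟨_, ⟨v, hv, ⟨f, hfH⟩, hf, rfl⟩, w, hw, Subtype.ext hvfw⟩
  · rintro ⟨_, ⟨v, hv, f, hf, rfl⟩, w, hw, rfl⟩
    exact ⟨_, ⟨_, ⟨v, hv, rfl⟩, _, hf, rfl⟩, _, ⟨w, hw, rfl⟩, rfl⟩

theorem RoelckePrecompact.of_image_val {G : Type*} [Group G] [TopologicalSpace G]
    {H : Subgroup G} (hH : IsOpen (H : Set G)) {A : Set H}
    (hA : RoelckePrecompact (((↑) : H → G) '' A)) : RoelckePrecompact A := by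
  intro V hV
  obtain ⟨F, hF⟩ := hA _ (hH.isOpenMap_subtype_val.image_mem_nhds hV)
  refine ⟨F.preimage (↑) Subtype.val_injective.injOn, ?_⟩
  rw [Finset.coe_preimage, ← H.preimage_val_image_mul_mul_image]
  exact Set.image_subset_iff.mp hF

theorem locallyRoelckePrecompact_iff_openSubgroup_general
    (G : Type*) [Group G] [TopologicalSpace G]
    (H : Subgroup G) (hH : IsOpen (H : Set G)) :
    LocallyRoelckePrecompact G ↔ LocallyRoelckePrecompact H := by
  constructor
  · rintro ⟨U, hUo, hU1, hU⟩
    exact ⟨Subtype.val ⁻¹' U, hUo.preimage continuous_subtype_val, hU1,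
      .of_image_val hH (hU.mono_s11 (Set.image_preimage_subset _ _))⟩
  · rintro ⟨U, hUo, hU1, hU⟩
    exact ⟨Subtype.val '' U, hH.isOpenMap_subtype_val U hUo, ⟨1, hU1, rfl⟩,
      hU.image H.subtype continuous_subtype_val⟩

/-- For an open subgroup `H` of a Polish group `G` (a Polish group in the subspace
topology), `G` is locally Roelcke precompact if and only if `H` is. -/
theorem locallyRoelckePrecompact_iff_openSubgroup
    (G : Type*) [Group G] [TopologicalSpace G] [IsTopologicalGroup G] [PolishSpace G]
    (H : Subgroup G) (hH : IsOpen (H : Set G)) :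
    LocallyRoelckePrecompact G ↔ LocallyRoelckePrecompact H :=
  locallyRoelckePrecompact_iff_openSubgroup_general G H hH
end
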